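/- arXiv:2307.10466 — 2 statements merged into one kernel-verified Lean document; each statement's English description precedes it below -/
import Mathlib

section
/- A distribution μ on binom([n],k) is η-spectrally independent (λ_max(Ψ_μ) ≤ η) if and only if the Hessian of the function z ↦ log g_μ(z₁^{1/η}, …, z_n^{1/η}) evaluated at z = (1,…,1) is negative semidefinite, which in turn equals (1/η)² D Ψ_μ − (1/η) D, where D is the diagonal matrix with D_{ii} = P_μ[i ∈ S]. -/
open Finset BigOperators

noncomputable section

def kSets (n k : ℕ) : Finset (Finset (Fin n)) := Finset.univ.powersetCard k

def margin {n : ℕ} (μ : Finset (Fin n) → ℝ) (k : ℕ) (i : Fin n) : ℝ :=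
  ∑ S ∈ kSets n k, if i ∈ S then μ S else 0

def pairProb {n : ℕ} (μ : Finset (Fin n) → ℝ) (k : ℕ) (i j : Fin n) : ℝ :=
  ∑ S ∈ kSets n k, if i ∈ S ∧ j ∈ S then μ S else 0

def condProb {n : ℕ} (μ : Finset (Fin n) → ℝ) (k : ℕ) (i j : Fin n) : ℝ :=
  pairProb μ k i j / margin μ k i

def corrMatrix {n : ℕ} (μ : Finset (Fin n) → ℝ) (k : ℕ) : Matrix (Fin n) (Fin n) ℝ :=
  fun i j => if i = j then 1 - margin μ k i else condProb μ k i j - margin μ k j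

def SpectrallyIndependent {n : ℕ} (μ : Finset (Fin n) → ℝ) (k : ℕ) (C : ℝ) : Prop :=
  ∀ t : ℝ, Module.End.HasEigenvalue (Matrix.toLin' (corrMatrix μ k)) t → t ≤ C

/-- The function `z ↦ log g_μ(z₁^{1/η}, …, z_n^{1/η})`. -/
def logGen {n : ℕ} (μ : Finset (Fin n) → ℝ) (k : ℕ) (η : ℝ) : (Fin n → ℝ) → ℝ :=
  fun z => Real.log (∑ S ∈ kSets n k, μ S * ∏ i ∈ S, z i ^ (1 / η))

/-- Second partial derivative (Hessian entry) of `F : (Fin n → ℝ) → ℝ` at `x`. -/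
def hessEntry {n : ℕ} (F : (Fin n → ℝ) → ℝ) (x : Fin n → ℝ) (i j : Fin n) : ℝ :=
  fderiv ℝ (fun y => fderiv ℝ F y (Pi.single j 1)) x (Pi.single i 1)

/-! Write `α = 1/η` and `g(z) = ∑_S μ(S) ∏_{i ∈ S} z_i^α`. Away from the coordinate hyperplanes
`∂_j g = (α / z_j) g_j`, where `g_j` is the same sum over the sets containing `j`; hence
`∂_j log g = α z_j⁻¹ g_j / g`, and differentiating once more at `z = 1`, where `g = 1`,
`g_j = P[j]` and `g_{ij} = P[i, j]`, gives the Hessian `α² C - α D` with `C` the covariance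
matrix `P[i, j] - P[i] P[j] = (D Ψ)_{ij}`. So its negative is `α² (η D - C)`. Conjugating by
`D^{1/2}`, `Ψ = D⁻¹ C` is similar to the symmetric matrix `S = D^{-1/2} C D^{-1/2}` and
`η D - C` is congruent to `η - S`; both conditions say that the spectrum of `S` lies below `η`. -/

open Matrix

section GeneratingPolynomial

variable {ι : Type*}

def genPoly (A : Finset (Finset ι)) (w : Finset ι → ℝ) (α : ℝ) (z : ι → ℝ) : ℝ :=
  ∑ S ∈ A, w S * ∏ i ∈ S, z i ^ α

theorem genPoly_one (A : Finset (Finset ι)) (w : Finset ι → ℝ) (α : ℝ) :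
    genPoly A w α 1 = ∑ S ∈ A, w S := by
  simp [genPoly]

variable [DecidableEq ι]

def restrictMem (w : Finset ι → ℝ) (j : ι) (S : Finset ι) : ℝ := if j ∈ S then w S else 0

variable [Fintype ι]

theorem hasFDerivAt_prod_rpow (S : Finset ι) (α : ℝ) {y : ι → ℝ} (hy : ∀ i, y i ≠ 0) :
    HasFDerivAt (fun z : ι → ℝ => ∏ i ∈ S, z i ^ α)
      (∑ i ∈ S, (α / y i * ∏ j ∈ S, y j ^ α) •
        (ContinuousLinearMap.proj i : (ι → ℝ) →L[ℝ] ℝ)) y := by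
  refine (HasFDerivAt.finsetProd (u := S) fun i _ =>
    (Real.hasDerivAt_rpow_const (p := α) (Or.inl (hy i))).comp_hasFDerivAt y
      (hasFDerivAt_apply (𝕜 := ℝ) i y)).congr_fderiv (Finset.sum_congr rfl fun i hi => ?_)
  rw [smul_smul, ← Finset.mul_prod_erase S _ hi, Real.rpow_sub_one (hy i)]
  simp only [Function.comp_apply]
  field_simp

theorem hasFDerivAt_genPoly (A : Finset (Finset ι)) (w : Finset ι → ℝ) (α : ℝ) {y : ι → ℝ}
    (hy : ∀ i, y i ≠ 0) :
    HasFDerivAt (genPoly A w α)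
      (∑ j, (α / y j * genPoly A (restrictMem w j) α y) •
        (ContinuousLinearMap.proj j : (ι → ℝ) →L[ℝ] ℝ)) y := by
  refine (HasFDerivAt.fun_sum (u := A) fun S _ =>
    (hasFDerivAt_prod_rpow S α hy).const_mul (w S)).congr_fderiv ?_
  ext v
  simp only [_root_.sum_apply, _root_.smul_apply, ContinuousLinearMap.proj_apply, smul_eq_mul,
    mul_sum, sum_mul, genPoly, restrictMem, ite_mul, zero_mul, mul_ite, mul_zero]
  rw [Finset.sum_comm]
  refine Finset.sum_congr rfl fun S _ => ?_
  rw [Finset.sum_ite_mem, Finset.univ_inter]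
  exact Finset.sum_congr rfl fun i _ => by ring

theorem fderiv_log_genPoly_single (A : Finset (Finset ι)) (w : Finset ι → ℝ) (α : ℝ)
    {y : ι → ℝ} (hy : ∀ i, y i ≠ 0) (hg : genPoly A w α y ≠ 0) (j : ι) :
    fderiv ℝ (fun z => Real.log (genPoly A w α z)) y (Pi.single j 1) =
      α * (y j)⁻¹ * genPoly A (restrictMem w j) α y * (genPoly A w α y)⁻¹ := by
  rw [((hasFDerivAt_genPoly A w α hy).log hg).fderiv]
  simp only [_root_.smul_apply, _root_.sum_apply, ContinuousLinearMap.proj_apply, Pi.single_apply,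
    smul_eq_mul, mul_ite, mul_one, mul_zero, sum_ite_eq', mem_univ, if_true]
  ring

theorem hessian_log_genPoly_one (A : Finset (Finset ι)) (w : Finset ι → ℝ) (α : ℝ)
    (hw : ∑ S ∈ A, w S = 1) (i j : ι) :
    fderiv ℝ (fun y => fderiv ℝ (fun z => Real.log (genPoly A w α z)) y (Pi.single j 1)) 1
        (Pi.single i 1) =
      α ^ 2 * ∑ S ∈ A, restrictMem (restrictMem w j) i S
        - α ^ 2 * (∑ S ∈ A, restrictMem w i S) * (∑ S ∈ A, restrictMem w j S)
        - if i = j then α * ∑ S ∈ A, restrictMem w j S else 0 := by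
  have hg1 : genPoly A w α 1 = 1 := by rw [genPoly_one, hw]
  have h1 : ∀ i, (1 : ι → ℝ) i ≠ 0 := fun _ => one_ne_zero
  have hnz : ∀ᶠ y in nhds (1 : ι → ℝ), ∀ i, y i ≠ 0 :=
    Filter.eventually_all.2 fun i => (continuous_apply i).continuousAt.eventually_ne (h1 i)
  have hgnz : ∀ᶠ y in nhds (1 : ι → ℝ), genPoly A w α y ≠ 0 :=
    (hasFDerivAt_genPoly A w α h1).continuousAt.eventually_ne (by simp [hg1])
  have hpartial : (fun y => fderiv ℝ (fun z => Real.log (genPoly A w α z)) y (Pi.single j 1))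
      =ᶠ[nhds 1] fun y => α * (y j)⁻¹ * genPoly A (restrictMem w j) α y * (genPoly A w α y)⁻¹ :=
    (hnz.and hgnz).mono fun y hy => fderiv_log_genPoly_single A w α hy.1 hy.2 j
  have hΦ : HasFDerivAt
      (fun y => α * (y j)⁻¹ * genPoly A (restrictMem w j) α y * (genPoly A w α y)⁻¹) _ 1 :=
    ((((hasDerivAt_inv (h1 j)).comp_hasFDerivAt 1 (hasFDerivAt_apply (𝕜 := ℝ) j 1)).const_mul
      α).mul (hasFDerivAt_genPoly A (restrictMem w j) α h1)).mul
      ((hasDerivAt_inv (by simp [hg1])).comp_hasFDerivAt 1 (hasFDerivAt_genPoly A w α h1))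
  rw [hpartial.fderiv_eq, hΦ.fderiv]
  simp only [Function.comp_apply, Pi.mul_apply, Pi.one_apply, inv_one, one_pow, mul_one, div_one,
    genPoly_one, hg1, neg_smul, one_smul, smul_neg, smul_add, _root_.add_apply, _root_.neg_apply,
    _root_.smul_apply, _root_.sum_apply, ContinuousLinearMap.proj_apply, Pi.single_apply,
    smul_eq_mul, mul_ite, mul_zero, sum_ite_eq', mem_univ, if_true]
  rcases eq_or_ne i j with rfl | hij
  · simp only [if_true]
    ring
  · simp only [hij, hij.symm, if_false]
    ring

end GeneratingPolynomial

section SpectralIndependence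

theorem Matrix.posSemidef_smul_iff {ι : Type*} {c : ℝ} (hc : 0 < c) {A : Matrix ι ι ℝ} :
    (c • A).PosSemidef ↔ A.PosSemidef :=
  ⟨fun h => by simpa [smul_smul, hc.ne'] using h.smul (inv_nonneg.2 hc.le), fun h => h.smul hc.le⟩

variable {ι : Type*} [Fintype ι] [DecidableEq ι]

theorem Matrix.IsHermitian.posSemidef_smul_one_sub_iff {S : Matrix ι ι ℝ} (hS : S.IsHermitian)
    (η : ℝ) : (η • 1 - S).PosSemidef ↔ ∀ t ∈ spectrum ℝ S, t ≤ η := by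
  have hηS : (algebraMap ℝ (Matrix ι ι ℝ) η - S).IsHermitian := (isHermitian_diagonal _).sub hS
  rw [posSemidef_iff_isHermitian_and_spectrum_nonneg, ← Algebra.algebraMap_eq_smul_one,
    ← spectrum.singleton_sub_eq, Set.singleton_sub, Set.image_subset_iff]
  simp only [hηS, true_and, Set.subset_def, Set.mem_preimage, Set.mem_ofPred_eq, sub_nonneg]

theorem forall_hasEigenvalue_le_iff_posSemidef {d : ι → ℝ} (hd : ∀ i, 0 < d i)
    {Ψ : Matrix ι ι ℝ} (hC : (diagonal d * Ψ).IsHermitian) (η : ℝ) :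
    (∀ t, Module.End.HasEigenvalue (toLin' Ψ) t → t ≤ η) ↔
      (η • diagonal d - diagonal d * Ψ).PosSemidef := by
  set s : ι → ℝ := fun i => √(d i)
  have hs : ∀ i, s i ≠ 0 := fun i => (Real.sqrt_pos.2 (hd i)).ne'
  set U := diagonal s
  set V := diagonal s⁻¹
  have hUV : U * V = 1 := by simp [U, V, hs]
  have hVU : V * U = 1 := by simp [U, V, hs]
  have hUU : U * U = diagonal d := by simp [U, s, Real.mul_self_sqrt (hd _).le]
  have hUh : star U = U := by simp [U, star_eq_conjTranspose]
  set S : Matrix ι ι ℝ := V * (diagonal d * Ψ) * V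
  have hS : S.IsHermitian := by
    simpa [S, V, star_eq_conjTranspose] using isHermitian_conjTranspose_mul_mul V hC
  have hΨ : Ψ = V * S * U := by
    simp only [S, ← hUU, mul_assoc]
    rw [hVU, mul_one, ← mul_assoc V U, hVU, one_mul, ← mul_assoc, hVU, one_mul]
  have hA : η • diagonal d - diagonal d * Ψ = U * (η • 1 - S) * star U := by
    simp only [hUh, mul_sub, sub_mul, mul_smul_comm, smul_mul_assoc, mul_one, hUU, S,
      ← mul_assoc, hUV, one_mul]
    simp only [mul_assoc, hVU, mul_one]
  let u : (Matrix ι ι ℝ)ˣ := ⟨U, V, hUV, hVU⟩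
  rw [hA, u.isUnit.posSemidef_star_right_conjugate_iff, hS.posSemidef_smul_one_sub_iff]
  simp_rw [Module.End.hasEigenvalue_iff_mem_spectrum, spectrum_toLin']
  rw [hΨ, show V * S * U = ↑u⁻¹ * S * ↑u from rfl, spectrum.units_conjugate']

end SpectralIndependence

section Correlation

variable {n : ℕ} (μ : Finset (Fin n) → ℝ) (k : ℕ)

def covMatrix : Matrix (Fin n) (Fin n) ℝ :=
  of fun i j => pairProb μ k i j - margin μ k i * margin μ k j

theorem pairProb_comm (i j : Fin n) : pairProb μ k i j = pairProb μ k j i := by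
  simp only [pairProb, and_comm]

theorem pairProb_self (i : Fin n) : pairProb μ k i i = margin μ k i := by
  simp only [pairProb, margin, and_self]

theorem margin_eq_sum_restrictMem (i : Fin n) :
    margin μ k i = ∑ S ∈ kSets n k, restrictMem μ i S :=
  rfl

theorem pairProb_eq_sum_restrictMem (i j : Fin n) :
    pairProb μ k i j = ∑ S ∈ kSets n k, restrictMem (restrictMem μ j) i S := by
  simp only [pairProb, restrictMem, ite_and]

theorem covMatrix_isHermitian : (covMatrix μ k).IsHermitian := by
  ext i j
  simp [covMatrix, pairProb_comm μ k i j, mul_comm]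

theorem diagonal_margin_mul_corrMatrix (hmarg : ∀ i, margin μ k i ≠ 0) :
    diagonal (margin μ k) * corrMatrix μ k = covMatrix μ k := by
  ext i j
  rcases eq_or_ne i j with rfl | hij
  · simp only [diagonal_mul, corrMatrix, covMatrix, of_apply, pairProb_self, if_true]
    ring
  · simp only [diagonal_mul, corrMatrix, covMatrix, of_apply, condProb, hij, if_false]
    field_simp [hmarg i]

theorem hessEntry_logGen_one {η : ℝ} (hsum : ∑ S ∈ kSets n k, μ S = 1) (i j : Fin n) :
    hessEntry (logGen μ k η) (fun _ => 1) i j =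
      ((1 / η) ^ 2 • covMatrix μ k - (1 / η) • diagonal (margin μ k)) i j := by
  have hess := hessian_log_genPoly_one (kSets n k) μ (1 / η) hsum i j
  rw [← pairProb_eq_sum_restrictMem, ← margin_eq_sum_restrictMem,
    ← margin_eq_sum_restrictMem] at hess
  refine hess.trans ?_
  rcases eq_or_ne i j with rfl | hij
  · simp only [covMatrix, Matrix.sub_apply, Matrix.smul_apply, of_apply, diagonal_apply_eq,
      smul_eq_mul, if_true]
    ring
  · simp only [covMatrix, Matrix.sub_apply, Matrix.smul_apply, of_apply, diagonal_apply_ne _ hij,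
      smul_eq_mul, hij, if_false]
    ring

end Correlation

theorem spectral_independence_iff_hessian_neg_semidef_general
    (n k : ℕ) (μ : Finset (Fin n) → ℝ) (η : ℝ)
    (hη : 0 < η)
    (hsum : ∑ S ∈ kSets n k, μ S = 1)
    (hmarg : ∀ i, 0 < margin μ k i) :
    (∀ i j, hessEntry (logGen μ k η) (fun _ => 1) i j =
        ((1 / η) ^ 2 • (Matrix.diagonal (margin μ k) * corrMatrix μ k)
          - (1 / η) • Matrix.diagonal (margin μ k)) i j)
    ∧ (SpectrallyIndependent μ k η ↔
        (-((1 / η) ^ 2 • (Matrix.diagonal (margin μ k) * corrMatrix μ k)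
          - (1 / η) • Matrix.diagonal (margin μ k))).PosSemidef) := by
  have hcov := diagonal_margin_mul_corrMatrix μ k fun i => (hmarg i).ne'
  refine ⟨fun i j => hcov ▸ hessEntry_logGen_one μ k hsum i j, ?_⟩
  have hneg : -((1 / η) ^ 2 • covMatrix μ k - (1 / η) • diagonal (margin μ k)) =
      (1 / η) ^ 2 • (η • diagonal (margin μ k) - covMatrix μ k) := by
    rw [smul_sub, smul_smul]
    field_simp
    abel
  rw [SpectrallyIndependent, forall_hasEigenvalue_le_iff_posSemidef hmarg
    (hcov ▸ covMatrix_isHermitian μ k), hcov, hneg, posSemidef_smul_iff (by positivity)]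

/-- `μ` on `binom([n],k)` is `η`-spectrally independent iff the Hessian of
`z ↦ log g_μ(z^{1/η})` at `z = 1` is negative semidefinite; moreover this Hessian equals
`(1/η)² D Ψ_μ − (1/η) D` where `D = diag(P_μ[i])`. -/
theorem spectral_independence_iff_hessian_neg_semidef
    (n k : ℕ) (μ : Finset (Fin n) → ℝ) (η : ℝ)
    (hk : 1 ≤ k) (hη : 0 < η)
    (hnonneg : ∀ S, 0 ≤ μ S)
    (hsum : ∑ S ∈ kSets n k, μ S = 1)
    (hmarg : ∀ i, 0 < margin μ k i) :
    (∀ i j, hessEntry (logGen μ k η) (fun _ => 1) i j =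
        ((1 / η) ^ 2 • (Matrix.diagonal (margin μ k) * corrMatrix μ k)
          - (1 / η) • Matrix.diagonal (margin μ k)) i j)
    ∧ (SpectrallyIndependent μ k η ↔
        (-((1 / η) ^ 2 • (Matrix.diagonal (margin μ k) * corrMatrix μ k)
          - (1 / η) • Matrix.diagonal (margin μ k))).PosSemidef) :=
  spectral_independence_iff_hessian_neg_semidef_general n k μ η hη hsum hmarg

end
end

section
/- Let μ be a distribution on binom([n],k), and suppose the 1 ↔ k up-down walk P = U_{1→k}D_{k→1} satisfies λ₂(P) ≤ C'/k for some C' < k. Then for every function f : binom([n],k) → R, Var_μ(f) ≤ (1/(1 − C'/k)) · E_{i ∼ μD_{k→1}}[Var_μ(f | i ∈ S)]. -/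
/-!
Write `g i = E[f | i ∈ S]` and `π = μ D_{k→1}`. The law of total variance gives
`Var_μ f = Var_π g + E_π[Var_μ(f | i ∈ S)]`, so it suffices to show `Var_π g ≤ (C'/k) Var_μ f`.
The walk factors as `P = D U`, where `U v (S)` averages `v` over `S` and `D h (i) = E[h | i ∈ S]`,
and `D`, `U` are adjoint between `L²(μ)` and `L²(π)`. For `v = g - E f`, which is centred under
`π`, this gives `Var_π g = ⟨f - E f, U v⟩_μ`, so by Cauchy–Schwarz
`(Var_π g)² ≤ Var_μ f · ‖U v‖²_μ = Var_μ f · ⟨v, P v⟩_π ≤ Var_μ f · (C'/k) Var_π g`.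
When `C' < 0` the hypothesis forces `π` to be a point mass; then `k = 1`, `μ` is a point mass too,
and both sides vanish.
-/

open Finset BigOperators

noncomputable section

def downMass {n : ℕ} (μ : Finset (Fin n) → ℝ) (k : ℕ) (T : Finset (Fin n)) : ℝ :=
  ∑ S ∈ kSets n k, if T ⊆ S then μ S else 0

/-- Conditional expectation `E_μ[f(S) | T ⊆ S]`. -/
def condExp {n : ℕ} (μ : Finset (Fin n) → ℝ) (k : ℕ) (T : Finset (Fin n))
    (f : Finset (Fin n) → ℝ) : ℝ :=
  (∑ S ∈ kSets n k, if T ⊆ S then μ S * f S else 0) / downMass μ k T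

/-- Conditional variance `Var_μ(f(S) | T ⊆ S)`. -/
def condVar {n : ℕ} (μ : Finset (Fin n) → ℝ) (k : ℕ) (T : Finset (Fin n))
    (f : Finset (Fin n) → ℝ) : ℝ :=
  condExp μ k T (fun S => (f S) ^ 2) - (condExp μ k T f) ^ 2

/-- Transition matrix of the `1 ↔ k` up-down walk `P = U_{1→k} D_{k→1}`. -/
def upDown {n : ℕ} (μ : Finset (Fin n) → ℝ) (k : ℕ) : Matrix (Fin n) (Fin n) ℝ :=
  fun i j => ∑ S ∈ kSets n k,
    (if i ∈ S then μ S / margin μ k i else 0) * (if j ∈ S then 1 / (k : ℝ) else 0)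

/-- The stationary distribution `μ D_{k→1}`. -/
def statDist {n : ℕ} (μ : Finset (Fin n) → ℝ) (k : ℕ) (i : Fin n) : ℝ :=
  margin μ k i / k

def distMean {n : ℕ} (μ : Finset (Fin n) → ℝ) (k : ℕ) (f : Finset (Fin n) → ℝ) : ℝ :=
  ∑ S ∈ kSets n k, μ S * f S

def distVar {n : ℕ} (μ : Finset (Fin n) → ℝ) (k : ℕ) (f : Finset (Fin n) → ℝ) : ℝ :=
  distMean μ k (fun S => (f S - distMean μ k f) ^ 2)

namespace Finset

variable {ι : Type*} (s : Finset ι) {w : ι → ℝ}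

lemma sum_mul_sub_sum_mul_eq_zero (hw : ∑ i ∈ s, w i = 1) (x : ι → ℝ) :
    ∑ i ∈ s, w i * (x i - ∑ j ∈ s, w j * x j) = 0 := by
  simp_rw [mul_sub, sum_sub_distrib, ← sum_mul, hw, one_mul, sub_self]

lemma sum_mul_sub_sq_eq (hw : ∑ i ∈ s, w i = 1) (x : ι → ℝ) :
    ∑ i ∈ s, w i * (x i - ∑ j ∈ s, w j * x j) ^ 2
      = ∑ i ∈ s, w i * x i ^ 2 - (∑ i ∈ s, w i * x i) ^ 2 := by
  set a := ∑ j ∈ s, w j * x j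
  have h : ∀ i ∈ s, w i * (x i - a) ^ 2 = w i * x i ^ 2 - 2 * a * (w i * x i) + a ^ 2 * w i :=
    fun i _ => by ring
  rw [sum_congr rfl h, sum_add_distrib, sum_sub_distrib, ← mul_sum, ← mul_sum, hw]
  ring

lemma sq_sum_mul_mul_le (hw : ∀ i ∈ s, 0 ≤ w i) (x y : ι → ℝ) :
    (∑ i ∈ s, w i * (x i * y i)) ^ 2 ≤ (∑ i ∈ s, w i * x i ^ 2) * ∑ i ∈ s, w i * y i ^ 2 :=
  sum_sq_le_sum_mul_sum_of_sq_le_mul s (fun i hi => mul_nonneg (hw i hi) (sq_nonneg _))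
    (fun i hi => mul_nonneg (hw i hi) (sq_nonneg _)) fun i _ => le_of_eq (by ring)

lemma sum_mul_sum_ite_mem {α : Type*} [Fintype α] [DecidableEq α] (s : Finset (Finset α))
    (x : α → ℝ) (h : Finset α → ℝ) :
    ∑ i, x i * ∑ S ∈ s, (if i ∈ S then h S else 0) = ∑ S ∈ s, h S * ∑ i ∈ S, x i := by
  simp_rw [mul_sum, mul_ite, mul_zero]
  rw [sum_comm]
  refine sum_congr rfl fun S _ => ?_
  rw [sum_ite_mem, univ_inter]
  exact sum_congr rfl fun i _ => mul_comm _ _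

end Finset

/-- `U_{1→k} v`, the average of `v` over a `k`-set. -/
def up {n : ℕ} (k : ℕ) (v : Fin n → ℝ) (S : Finset (Fin n)) : ℝ :=
  (∑ j ∈ S, v j) / k

section

variable {n k : ℕ} {μ : Finset (Fin n) → ℝ}

lemma up_one (hk : k ≠ 0) {S : Finset (Fin n)} (hS : S ∈ kSets n k) :
    up k (fun _ => 1) S = 1 := by
  rw [up, sum_const, (mem_powersetCard_univ.1 hS), nsmul_one, div_self (Nat.cast_ne_zero.2 hk)]

lemma downMass_singleton (i : Fin n) : downMass μ k {i} = margin μ k i := by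
  simp only [downMass, margin, singleton_subset_iff]

lemma upDown_mulVec (v : Fin n → ℝ) (i : Fin n) :
    (upDown μ k).mulVec v i = condExp μ k {i} (up k v) := by
  simp only [Matrix.mulVec, dotProduct, upDown, condExp, downMass_singleton, singleton_subset_iff,
    up, sum_mul, sum_div]
  rw [sum_comm]
  refine sum_congr rfl fun S _ => ?_
  split_ifs with hi
  · simp only [mul_ite, ite_mul, mul_zero, zero_mul, sum_ite_mem, univ_inter, mul_sum, sum_div]
    exact sum_congr rfl fun j _ => by ring
  · simp

lemma margin_nonneg (hμ : ∀ S, 0 ≤ μ S) (i : Fin n) : 0 ≤ margin μ k i :=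
  sum_nonneg fun S _ => by split_ifs <;> simp [hμ S]

lemma statDist_nonneg (hμ : ∀ S, 0 ≤ μ S) (i : Fin n) : 0 ≤ statDist μ k i :=
  div_nonneg (margin_nonneg hμ i) k.cast_nonneg

lemma margin_le_one (hμ : ∀ S, 0 ≤ μ S) (hsum : ∑ S ∈ kSets n k, μ S = 1) (i : Fin n) :
    margin μ k i ≤ 1 :=
  hsum ▸ sum_le_sum fun S _ => by split_ifs <;> simp [hμ S]

lemma statDist_mul_condExp_singleton (hμ : ∀ S, 0 ≤ μ S) (h : Finset (Fin n) → ℝ) (i : Fin n) :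
    statDist μ k i * condExp μ k {i} h = (∑ S ∈ kSets n k, if i ∈ S then μ S * h S else 0) / k := by
  rw [statDist, condExp, downMass_singleton]
  simp only [singleton_subset_iff]
  by_cases hm : margin μ k i = 0
  · have hterm : ∀ T ∈ kSets n k, 0 ≤ if i ∈ T then μ T else 0 := fun T _ => by
      split_ifs <;> simp [hμ T]
    have hzero : ∀ S ∈ kSets n k, i ∈ S → μ S = 0 := fun S hS hi => by
      simpa [hi] using (sum_eq_zero_iff_of_nonneg hterm).1 hm S hS
    rw [hm, sum_eq_zero fun S hS => by split_ifs with hi <;> simp [hzero S hS, hi]]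
    simp
  · field_simp

lemma sum_statDist_mul_condExp_mul (hμ : ∀ S, 0 ≤ μ S) (h : Finset (Fin n) → ℝ)
    (v : Fin n → ℝ) :
    ∑ i, statDist μ k i * condExp μ k {i} h * v i = distMean μ k (fun S => h S * up k v S) := by
  simp_rw [statDist_mul_condExp_singleton hμ]
  calc _ = (∑ i, v i * ∑ S ∈ kSets n k, if i ∈ S then μ S * h S else 0) / k := by
        rw [sum_div]; exact sum_congr rfl fun i _ => by ring
    _ = _ := by
        rw [sum_mul_sum_ite_mem, distMean, sum_div]
        exact sum_congr rfl fun S _ => by rw [up]; ring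

lemma sum_statDist_mul (v : Fin n → ℝ) :
    ∑ i, statDist μ k i * v i = distMean μ k (up k v) := by
  calc _ = (∑ i, v i * margin μ k i) / k := by
        rw [sum_div]; exact sum_congr rfl fun i _ => by rw [statDist]; ring
    _ = _ := by
        simp only [margin]
        rw [sum_mul_sum_ite_mem, distMean, sum_div]
        exact sum_congr rfl fun S _ => by rw [up]; ring

lemma distMean_const_mul (c : ℝ) (h : Finset (Fin n) → ℝ) :
    distMean μ k (fun S => c * h S) = c * distMean μ k h := by
  simp only [distMean, mul_sum]
  exact sum_congr rfl fun S _ => by ring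

lemma sum_statDist (hk : k ≠ 0) (hsum : ∑ S ∈ kSets n k, μ S = 1) :
    ∑ i, statDist μ k i = 1 := by
  have h1 := sum_statDist_mul (μ := μ) (k := k) fun _ => 1
  simp only [mul_one] at h1
  rw [h1, distMean]
  exact (sum_congr rfl fun S hS => by rw [up_one hk hS, mul_one]).trans hsum

lemma sum_statDist_mul_condExp (hμ : ∀ S, 0 ≤ μ S) (hk : k ≠ 0) (h : Finset (Fin n) → ℝ) :
    ∑ i, statDist μ k i * condExp μ k {i} h = distMean μ k h := by
  have h1 := sum_statDist_mul_condExp_mul (k := k) hμ h fun _ => 1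
  simp only [mul_one] at h1
  rw [h1, distMean, distMean]
  exact sum_congr rfl fun S hS => by rw [up_one hk hS, mul_one]

/-- `Var(E[f | i])` for `i` a uniformly random element of `S ∼ μ`. -/
def varCondExp (μ : Finset (Fin n) → ℝ) (k : ℕ) (f : Finset (Fin n) → ℝ) : ℝ :=
  ∑ i, statDist μ k i * (condExp μ k {i} f - distMean μ k f) ^ 2

lemma distVar_eq_varCondExp_add (hμ : ∀ S, 0 ≤ μ S) (hk : k ≠ 0)
    (hsum : ∑ S ∈ kSets n k, μ S = 1) (f : Finset (Fin n) → ℝ) :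
    distVar μ k f = varCondExp μ k f + ∑ i, statDist μ k i * condVar μ k {i} f := by
  have hmean := sum_statDist_mul_condExp hμ hk f
  have hsq := sum_statDist_mul_condExp hμ hk fun S => f S ^ 2
  have hV : distVar μ k f = distMean μ k (fun S => f S ^ 2) - distMean μ k f ^ 2 :=
    sum_mul_sub_sq_eq _ hsum f
  have hW : varCondExp μ k f
      = ∑ i, statDist μ k i * condExp μ k {i} f ^ 2 - distMean μ k f ^ 2 := by
    rw [varCondExp, ← hmean]
    exact sum_mul_sub_sq_eq _ (sum_statDist hk hsum) _
  have hE : ∑ i, statDist μ k i * condVar μ k {i} f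
      = distMean μ k (fun S => f S ^ 2) - ∑ i, statDist μ k i * condExp μ k {i} f ^ 2 := by
    simp only [condVar, mul_sub, sum_sub_distrib, hsq]
  rw [hV, hW, hE]
  ring

lemma sum_statDist_mul_upDown_mulVec (hμ : ∀ S, 0 ≤ μ S) (v : Fin n → ℝ) :
    ∑ i, statDist μ k i * v i * (upDown μ k).mulVec v i = distMean μ k (fun S => up k v S ^ 2) := by
  simp_rw [upDown_mulVec, mul_right_comm _ (v _), sum_statDist_mul_condExp_mul hμ, sq]

lemma sq_sum_statDist_mul_condExp_mul_le (hμ : ∀ S, 0 ≤ μ S) (f : Finset (Fin n) → ℝ)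
    {v : Fin n → ℝ} (hv : ∑ i, statDist μ k i * v i = 0) :
    (∑ i, statDist μ k i * condExp μ k {i} f * v i) ^ 2
      ≤ distVar μ k f * distMean μ k (fun S => up k v S ^ 2) := by
  set M := distMean μ k f
  have hcentre : distMean μ k (fun S => f S * up k v S)
      = distMean μ k (fun S => (f S - M) * up k v S) := by
    have : distMean μ k (fun S => M * up k v S) = 0 := by
      rw [distMean_const_mul, ← sum_statDist_mul, hv, mul_zero]
    simp only [distMean, sub_mul, mul_sub, sum_sub_distrib] at this ⊢
    linarith
  rw [sum_statDist_mul_condExp_mul hμ, hcentre]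
  exact sq_sum_mul_mul_le _ (fun S _ => hμ S) _ _

lemma distVar_eq_zero_of_forall_ne_eq_zero (hsum : ∑ S ∈ kSets n k, μ S = 1) {T : Finset (Fin n)}
    (hT : T ∈ kSets n k) (hμT : ∀ S ∈ kSets n k, S ≠ T → μ S = 0) (f : Finset (Fin n) → ℝ) :
    distVar μ k f = 0 := by
  have hmean : ∀ h : Finset (Fin n) → ℝ, distMean μ k h = μ T * h T := fun h =>
    sum_eq_single_of_mem T hT fun S hS hne => by rw [hμT S hS hne, zero_mul]
  rw [sum_eq_single_of_mem T hT hμT] at hsum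
  rw [distVar, hmean, hmean, hsum]
  ring

lemma exists_one_le_statDist (hk : k ≠ 0) (hsum : ∑ S ∈ kSets n k, μ S = 1)
    (h : ∀ v : Fin n → ℝ, ∑ i, statDist μ k i * v i = 0 → ∑ i, statDist μ k i * v i ^ 2 ≤ 0) :
    ∃ j, 1 ≤ statDist μ k j := by
  have hπ := sum_statDist hk hsum
  obtain ⟨j, -, hj⟩ : ∃ j ∈ univ, 0 < statDist μ k j := by
    by_contra! hle
    linarith [sum_nonpos hle]
  refine ⟨j, ?_⟩
  set e : Fin n → ℝ := fun i => if i = j then 1 else 0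
  have hmean : ∑ i, statDist μ k i * e i = statDist μ k j := by simp [e]
  have hsq : ∑ i, statDist μ k i * e i ^ 2 = statDist μ k j := by simp [e]
  have := h (fun i => e i - ∑ i, statDist μ k i * e i) (sum_mul_sub_sum_mul_eq_zero _ hπ e)
  rw [sum_mul_sub_sq_eq _ hπ, hmean, hsq] at this
  nlinarith

lemma distVar_eq_zero_of_one_le_statDist (hμ : ∀ S, 0 ≤ μ S) (hk : k ≠ 0)
    (hsum : ∑ S ∈ kSets n k, μ S = 1) {j : Fin n} (hj : 1 ≤ statDist μ k j)
    (f : Finset (Fin n) → ℝ) : distVar μ k f = 0 := by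
  have hkR : (0 : ℝ) < k := by positivity
  have hmk : (k : ℝ) ≤ margin μ k j := by rwa [statDist, le_div_iff₀ hkR, one_mul] at hj
  have hm1 := margin_le_one hμ hsum j
  obtain rfl : k = 1 := by
    have : (k : ℝ) ≤ 1 := hmk.trans hm1
    have : k ≤ 1 := by exact_mod_cast this
    omega
  have hout : ∀ S ∈ kSets n 1, j ∉ S → μ S = 0 := by
    have hzero : ∑ S ∈ kSets n 1, (μ S - if j ∈ S then μ S else 0) = 0 := by
      rw [sum_sub_distrib, hsum]
      simp only [margin] at hmk hm1
      push_cast at hmk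
      linarith
    intro S hS hjS
    have hnonneg : ∀ T ∈ kSets n 1, 0 ≤ μ T - if j ∈ T then μ T else 0 := fun T _ => by
      split_ifs <;> simp [hμ T]
    simpa [hjS] using (sum_eq_zero_iff_of_nonneg hnonneg).1 hzero S hS
  refine distVar_eq_zero_of_forall_ne_eq_zero hsum (T := {j}) (by simp [kSets]) (fun S hS hne => ?_) f
  obtain ⟨s, rfl⟩ := card_eq_one.1 (mem_powersetCard_univ.1 hS)
  exact hout _ hS fun hj => hne (by rw [mem_singleton.1 hj])

lemma distVar_eq_zero_of_neg (hμ : ∀ S, 0 ≤ μ S) (hk : k ≠ 0) (hsum : ∑ S ∈ kSets n k, μ S = 1)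
    {c : ℝ} (hc : c < 0)
    (hP : ∀ v : Fin n → ℝ, ∑ i, statDist μ k i * v i = 0 →
      ∑ i, statDist μ k i * v i * (upDown μ k).mulVec v i ≤ c * ∑ i, statDist μ k i * v i ^ 2)
    (f : Finset (Fin n) → ℝ) : distVar μ k f = 0 := by
  obtain ⟨j, hj⟩ := exists_one_le_statDist hk hsum fun v hv => by
    have hform := hP v hv
    rw [sum_statDist_mul_upDown_mulVec hμ] at hform
    have hQ : 0 ≤ distMean μ k (fun S => up k v S ^ 2) :=
      sum_nonneg fun S _ => mul_nonneg (hμ S) (sq_nonneg _)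
    nlinarith
  exact distVar_eq_zero_of_one_le_statDist hμ hk hsum hj f

lemma varCondExp_le_mul_distVar (hμ : ∀ S, 0 ≤ μ S) (hk : k ≠ 0)
    (hsum : ∑ S ∈ kSets n k, μ S = 1) {c : ℝ}
    (hP : ∀ v : Fin n → ℝ, ∑ i, statDist μ k i * v i = 0 →
      ∑ i, statDist μ k i * v i * (upDown μ k).mulVec v i ≤ c * ∑ i, statDist μ k i * v i ^ 2)
    (f : Finset (Fin n) → ℝ) : varCondExp μ k f ≤ c * distVar μ k f := by
  set M := distMean μ k f
  set v : Fin n → ℝ := fun i => condExp μ k {i} f - M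
  have hv : ∑ i, statDist μ k i * v i = 0 := by
    simpa only [v, M, ← sum_statDist_mul_condExp hμ hk f]
      using sum_mul_sub_sum_mul_eq_zero _ (sum_statDist hk hsum) _
  have hW : varCondExp μ k f = ∑ i, statDist μ k i * condExp μ k {i} f * v i := by
    have hMv : ∑ i, statDist μ k i * M * v i = 0 := by
      simp_rw [mul_right_comm _ M, ← sum_mul, hv, zero_mul]
    calc varCondExp μ k f
        = ∑ i, (statDist μ k i * condExp μ k {i} f * v i - statDist μ k i * M * v i) :=
          sum_congr rfl fun i _ => by ring
      _ = _ := by rw [sum_sub_distrib, hMv, sub_zero]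
  have hQ : distMean μ k (fun S => up k v S ^ 2) ≤ c * varCondExp μ k f := by
    rw [← sum_statDist_mul_upDown_mulVec hμ]
    exact hP v hv
  have hCS := sq_sum_statDist_mul_condExp_mul_le hμ f hv
  rw [← hW] at hCS
  have hW0 : 0 ≤ varCondExp μ k f :=
    sum_nonneg fun i _ => mul_nonneg (statDist_nonneg hμ i) (sq_nonneg _)
  have hV0 : 0 ≤ distVar μ k f :=
    sum_nonneg (s := kSets n k) fun S _ => mul_nonneg (hμ S) (sq_nonneg _)
  rcases le_or_gt 0 c with hc | hc
  · rcases hW0.eq_or_lt with h0 | hpos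
    · rw [← h0]
      exact mul_nonneg hc hV0
    · nlinarith [mul_le_mul_of_nonneg_left hQ hV0]
  · rw [distVar_eq_zero_of_neg hμ hk hsum hc hP f] at hCS ⊢
    nlinarith

end

/-- local-to-global step. If the `1 ↔ k` up-down walk satisfies
`λ₂(P) ≤ C'/k` (stated via the Rayleigh quotient bound on functions orthogonal to constants
in `L²(μ D_{k→1})`), then for every `f`,
`Var_μ(f) ≤ (1/(1 − C'/k)) · E_{i ∼ μ D_{k→1}}[Var_μ(f | i ∈ S)]`. -/
theorem variance_local_to_global
    (n k : ℕ) (μ : Finset (Fin n) → ℝ) (C' : ℝ)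
    (hk : 1 ≤ k) (hC' : C' < (k : ℝ))
    (hnonneg : ∀ S, 0 ≤ μ S)
    (hsum : ∑ S ∈ kSets n k, μ S = 1)
    (hlambda2 : ∀ v : Fin n → ℝ, (∑ i, statDist μ k i * v i) = 0 →
      ∑ i, statDist μ k i * v i * ((upDown μ k).mulVec v i) ≤
        (C' / k) * ∑ i, statDist μ k i * (v i) ^ 2) :
    ∀ f : Finset (Fin n) → ℝ,
      distVar μ k f ≤ (1 / (1 - C' / k)) * ∑ i, statDist μ k i * condVar μ k {i} f := by
  intro f
  have hk0 : k ≠ 0 := by omega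
  have hgap : 0 < 1 - C' / k := by
    rw [sub_pos, div_lt_one (by positivity)]
    exact hC'
  have htotal := distVar_eq_varCondExp_add hnonneg hk0 hsum f
  have hkey := varCondExp_le_mul_distVar hnonneg hk0 hsum hlambda2 f
  rw [one_div_mul_eq_div, le_div_iff₀ hgap]
  nlinarith

end
end
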